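/- For any non-backtracking walk w ∈ W_{e,−e} (a walk from a directed edge e to its reversal −e), one has λ(w) = −λ(w⁻¹), and λ(w) ∈ {i·x(w), −i·x(w)}, where i is the imaginary unit. -/

import Mathlib

open scoped BigOperators

/-- The straight line segment drawn for an (unordered) edge, given the
positions of the vertices in the complex plane. -/
def segOf {α : Type*} (pos : α → ℂ) : Sym2 α → Set ℂ :=
  Sym2.lift ⟨fun u v => segment ℝ (pos u) (pos v), fun u v => segment_symm ℝ (pos u) (pos v)⟩

/-- A finite graph embedded in the complex plane: vertices are distinct points
of `ℂ`, edges are unordered pairs of distinct vertices drawn as straight line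
segments which pairwise intersect only at common endpoints, and no vertex lies
on an edge which does not contain it. -/
structure PlaneGraph where
  V : Type
  fintypeV : Fintype V
  decEqV : DecidableEq V
  pos : V → ℂ
  pos_inj : Function.Injective pos
  E : Finset (Sym2 V)
  not_diag : ∀ e ∈ E, ¬ e.IsDiag
  edges_meet : ∀ e₁ ∈ E, ∀ e₂ ∈ E, e₁ ≠ e₂ → ∀ p : ℂ,
    p ∈ segOf pos e₁ → p ∈ segOf pos e₂ → ∃ w : V, w ∈ e₁ ∧ w ∈ e₂ ∧ p = pos w
  vertex_on_edge : ∀ e ∈ E, ∀ w : V, pos w ∈ segOf pos e → w ∈ e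

attribute [instance] PlaneGraph.fintypeV PlaneGraph.decEqV

namespace PlaneGraph

variable (G : PlaneGraph)

/-- A directed edge: an ordered pair of vertices whose underlying
unordered pair is an edge of the graph. -/
abbrev DEdge : Type := {p : G.V × G.V // s(p.1, p.2) ∈ G.E}

/-- The reversal `-e` of a directed edge. -/
def rev (e : G.DEdge) : G.DEdge :=
  ⟨(e.val.2, e.val.1), by rw [Sym2.eq_swap]; exact e.property⟩

/-- The undirected version `ē` of a directed edge. -/
def undir (e : G.DEdge) : Sym2 G.V := s(e.val.1, e.val.2)

/-- The turning angle `∠(e,g) = Arg((h_g - t_g)/(h_e - t_e)) ∈ (-π, π]`. -/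
noncomputable def tangle (e g : G.DEdge) : ℝ :=
  Complex.arg ((G.pos g.val.2 - G.pos g.val.1) / (G.pos e.val.2 - G.pos e.val.1))

/-- The Kac–Ward transition matrix `Λ`, indexed by directed edges. -/
noncomputable def transMatrix (x : Sym2 G.V → ℝ) : Matrix G.DEdge G.DEdge ℂ :=
  fun e g =>
    if e.val.2 = g.val.1 ∧ g ≠ G.rev e then
      (x (G.undir e) : ℂ) * Complex.exp (Complex.I / 2 * (G.tangle e g : ℂ))
    else 0

/-- A non-backtracking walk of length `n ≥ 1`, encoded as the list
`(w₁, …, w_{n+1})` of its `n+1` directed edges: consecutive edges are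
incident head-to-tail and the walk never immediately reverses an edge. -/
def IsWalk (l : List G.DEdge) : Prop :=
  2 ≤ l.length ∧ l.Chain' (fun e g => e.val.2 = g.val.1 ∧ g ≠ G.rev e)

/-- The length `|w|` (number of steps) of a walk given as a list of edges. -/
def len (l : List G.DEdge) : ℕ := l.length - 1

/-- The weight `λ(w) = ∏_{i=1}^{n} Λ_{w_i, w_{i+1}}` of a walk. -/
noncomputable def wlam (x : Sym2 G.V → ℝ) (l : List G.DEdge) : ℂ :=
  (List.zipWith (fun e g => G.transMatrix x e g) l l.tail).prod

/-- The edge weight `x(w) = ∏_{i=1}^{n} x_{\bar{w_i}}` of a walk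
(the weight of the last edge is not included). -/
def wx (x : Sym2 G.V → ℝ) (l : List G.DEdge) : ℝ :=
  (l.dropLast.map (fun e => x (G.undir e))).prod

/-- The total turning angle `α(w) = Σ_{i=1}^{n} ∠(w_i, w_{i+1})` of a walk. -/
noncomputable def walpha (l : List G.DEdge) : ℝ :=
  (List.zipWith (fun e g => G.tangle e g) l l.tail).sum

/-- The reversal `w⁻¹ = (-w_{n+1}, …, -w₁)` of a walk. -/
def wrev (l : List G.DEdge) : List G.DEdge := (l.map G.rev).reverse

/-- The concatenation `w ⊕ w'` of two walks, the first ending with the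
directed edge with which the second starts. -/
def wconcat (l l' : List G.DEdge) : List G.DEdge := l ++ l'.tail

/-- A (rooted) loop: a walk of length at least `2` which starts and ends
with the same directed edge. -/
def IsLoop (l : List G.DEdge) : Prop :=
  G.IsWalk l ∧ 3 ≤ l.length ∧ l.head? = l.getLast?

/-- The number of times a loop `ℓ = (ℓ₁, …, ℓ_{n+1})` visits a directed
edge `e`, i.e. the number of occurrences of `e` among `ℓ₁, …, ℓ_n`. -/
def visits (l : List G.DEdge) (e : G.DEdge) : ℕ := l.dropLast.count e

/-- A loop `ℓ` of length `n` is self-avoiding if each vertex appearing in it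
appears in exactly two of the directed edges `ℓ₁, …, ℓ_n`. -/
def SelfAvoiding (l : List G.DEdge) : Prop :=
  G.IsLoop l ∧ ∀ v : G.V,
    l.dropLast.countP (fun e => decide (v = e.val.1 ∨ v = e.val.2)) ≠ 0 →
    l.dropLast.countP (fun e => decide (v = e.val.1 ∨ v = e.val.2)) = 2

/-- The degree of a vertex: the number of edges containing it. -/
def degV (v : G.V) : ℕ := (G.E.filter (fun e => v ∈ e)).card

/-- A finite set of edges is even if every vertex belongs to an even number
of its edges. -/
def IsEvenSet (H : Finset (Sym2 G.V)) : Prop :=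
  ∀ v : G.V, Even ((H.filter (fun e => v ∈ e)).card)

instance : DecidablePred G.IsEvenSet := fun H =>
  decidable_of_iff (∀ v : G.V, Even ((H.filter (fun e => v ∈ e)).card)) Iff.rfl

/-- The generating function `Z = Σ_{H even} ∏_{ē ∈ H} x_ē` of even
subgraphs. -/
def Z (x : Sym2 G.V → ℝ) : ℝ :=
  ∑ H ∈ G.E.powerset.filter G.IsEvenSet, ∏ e ∈ H, x e

end PlaneGraph

/-!
Along a non-backtracking walk each step contributes `x_ē · exp(i∠/2)`, so
`λ(w) = x(w) · exp(iα(w)/2)` with `α(w)` the total turning angle. Each factor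
`exp(i∠(e,g))` is the quotient of the unit directions of `g` and `e`, so the product
telescopes: for `w ∈ W_{e,-e}` we get `exp(iα(w)) = -1`, i.e. `exp(iα(w)/2) = ±i`. Reversing
`w` negates every turning angle (no angle equals `π`, by planarity) and keeps `x(w)`, because
the first and last edges of `w` carry the same weight; hence
`λ(w⁻¹) = x(w) · exp(-iα(w)/2) = -λ(w)`.
-/

namespace List

variable {α β : Type*}

theorem zipWith_tail_congr_of_isChain {R : α → α → Prop} {f g : α → α → β}
    (hfg : ∀ a b, R a b → f a b = g a b) :
    ∀ {l : List α}, l.IsChain R → zipWith f l l.tail = zipWith g l l.tail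
  | [], _ | [_], _ => rfl
  | a :: b :: _, h => by
    rw [isChain_cons_cons] at h
    exact congrArg₂ cons (hfg a b h.1) (zipWith_tail_congr_of_isChain hfg h.2)

theorem zipWith_dropLast_tail (f : α → α → β) (l : List α) :
    zipWith f l.dropLast l.tail = zipWith f l l.tail := by
  rw [zipWith_eq_zipWith_take_min (l₁ := l), length_tail, min_eq_right (Nat.sub_le _ _),
    ← dropLast_eq_take, ← length_tail, take_length]

theorem zipWith_reverse_tail (f : α → α → β) (l : List α) :
    zipWith f l.reverse l.reverse.tail = (zipWith (fun a b => f b a) l l.tail).reverse := by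
  rw [← zipWith_dropLast_tail, ← zipWith_dropLast_tail, dropLast_reverse, tail_reverse,
    ← reverse_zipWith (by simp), zipWith_comm]

theorem prod_zipWith_div_tail {G₀ : Type*} [CommGroupWithZero G₀] {f : α → G₀}
    (hf : ∀ a, f a ≠ 0) :
    ∀ {l : List α} {a b : α}, l.head? = some a → l.getLast? = some b →
      (zipWith (fun c d => f d / f c) l l.tail).prod = f b / f a
  | [], _, _, ha, _ => by simp at ha
  | [c], a, b, ha, hb => by
    simp only [head?_cons, getLast?_singleton, Option.some_inj] at ha hb
    subst ha hb
    simp [hf]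
  | c :: d :: l, a, b, ha, hb => by
    simp only [head?_cons, Option.some_inj] at ha
    subst ha
    rw [getLast?_cons_cons] at hb
    have ih := prod_zipWith_div_tail hf (l := d :: l) head?_cons hb
    simp only [tail_cons, zipWith_cons_cons, prod_cons] at ih ⊢
    rw [ih]
    field_simp [hf]

theorem prod_tail_eq_prod_dropLast {M : Type*} [CommMonoid M] {l : List M}
    (h : l.head? = l.getLast?) : l.tail.prod = l.dropLast.prod := by
  rcases l with _ | ⟨a, l⟩
  · rfl
  rcases l.eq_nil_or_concat with rfl | ⟨l, b, rfl⟩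
  · rfl
  obtain rfl : a = b := by simpa [getLast?_cons] using h
  simp [dropLast_cons_of_ne_nil, mul_comm]

end List

theorem Complex.exp_arg_mul_I {z : ℂ} (hz : z ≠ 0) : exp (arg z * I) = z / ‖z‖ := by
  rw [eq_div_iff (by simpa using hz), mul_comm]
  exact norm_mul_exp_arg_mul_I z

theorem Complex.exp_list_sum_mul_I (l : List ℝ) :
    exp (((l.sum : ℝ) : ℂ) * I) = (l.map fun θ : ℝ => exp (θ * I)).prod := by
  induction l with
  | nil => simp
  | cons θ l ih => simp [add_mul, exp_add, ih]

namespace PlaneGraph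

variable (G : PlaneGraph)

def IsStep (e g : G.DEdge) : Prop := e.val.2 = g.val.1 ∧ g ≠ G.rev e

noncomputable def dir (e : G.DEdge) : ℂ := G.pos e.val.2 - G.pos e.val.1

noncomputable def unitDir (e : G.DEdge) : ℂ := G.dir e / ‖G.dir e‖

variable {G}

theorem ne_of_mk_mem_E {a b : G.V} (h : s(a, b) ∈ G.E) : a ≠ b := fun hab =>
  G.not_diag _ h (Sym2.mk_isDiag_iff.mpr hab)

theorem dir_ne_zero (e : G.DEdge) : G.dir e ≠ 0 :=
  sub_ne_zero.mpr fun h => ne_of_mk_mem_E e.property (G.pos_inj h).symm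

theorem dir_rev (e : G.DEdge) : G.dir (G.rev e) = -G.dir e :=
  (neg_sub _ _).symm

theorem unitDir_ne_zero (e : G.DEdge) : G.unitDir e ≠ 0 := by
  simp [unitDir, dir_ne_zero]

theorem unitDir_rev (e : G.DEdge) : G.unitDir (G.rev e) = -G.unitDir e := by
  simp only [unitDir, dir_rev, norm_neg, neg_div]

theorem undir_rev (e : G.DEdge) : G.undir (G.rev e) = G.undir e :=
  Sym2.eq_swap

theorem tangle_eq_arg (e g : G.DEdge) : G.tangle e g = Complex.arg (G.dir g / G.dir e) := rfl

theorem eq_of_pos_sub_eq_mul_of_mem_Icc {a b c : G.V} (hab : s(a, b) ∈ G.E)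
    (hbc : s(b, c) ∈ G.E) {r : ℝ} (hr : r ∈ Set.Icc (-1) 0)
    (h : G.pos c - G.pos b = r * (G.pos b - G.pos a)) : c = a := by
  have hmem : G.pos c ∈ segOf G.pos s(a, b) := by
    refine ⟨-r, 1 + r, by linarith [hr.2], by linarith [hr.1], by ring, ?_⟩
    simp only [Complex.real_smul]
    push_cast
    linear_combination -h
  rcases Sym2.mem_iff.mp (G.vertex_on_edge _ hab c hmem) with hca | hcb
  · exact hca
  · exact absurd hcb.symm (ne_of_mk_mem_E hbc)

theorem eq_of_pos_sub_eq_neg_mul {a b c : G.V} (hab : s(a, b) ∈ G.E) (hbc : s(b, c) ∈ G.E)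
    {r : ℝ} (hr : r < 0) (h : G.pos c - G.pos b = r * (G.pos b - G.pos a)) : c = a := by
  rcases le_total (-1) r with hr1 | hr1
  · exact eq_of_pos_sub_eq_mul_of_mem_Icc hab hbc ⟨hr1, hr.le⟩ h
  · refine (eq_of_pos_sub_eq_mul_of_mem_Icc (Sym2.eq_swap ▸ hbc) (Sym2.eq_swap ▸ hab)
      (r := r⁻¹) ⟨?_, (inv_neg''.mpr hr).le⟩ ?_).symm
    · exact (le_inv_of_neg (by norm_num) hr).mpr (by simpa using hr1)
    · rw [Complex.ofReal_inv, eq_inv_mul_iff_mul_eq₀ (by exact_mod_cast hr.ne)]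
      linear_combination h

/-- A turn by `π` would run back along the previous edge, over its tail or beyond it, which
the planar embedding excludes unless `g = -e`. -/
theorem tangle_ne_pi {e g : G.DEdge} (h : G.IsStep e g) : G.tangle e g ≠ Real.pi := by
  intro hpi
  obtain ⟨hre, him⟩ := Complex.arg_eq_pi_iff.mp hpi
  have hreal : ((G.dir g / G.dir e).re : ℂ) = G.dir g / G.dir e :=
    Complex.ext (Complex.ofReal_re _) ((Complex.ofReal_im _).trans him.symm)
  have hdir : G.dir g = (G.dir g / G.dir e).re * G.dir e := by
    rw [hreal, div_mul_cancel₀ _ (dir_ne_zero e)]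
  have hg : g.val.2 = e.val.1 := by
    refine eq_of_pos_sub_eq_neg_mul e.property ?_ hre ?_
    · simpa [h.1] using g.property
    · simpa [dir, h.1] using hdir
  exact h.2 (Subtype.ext (Prod.ext h.1.symm hg))

theorem tangle_rev_rev {e g : G.DEdge} (h : G.IsStep e g) :
    G.tangle (G.rev g) (G.rev e) = -G.tangle e g := by
  rw [tangle_eq_arg, dir_rev, dir_rev, neg_div_neg_eq, ← inv_div, Complex.arg_inv,
    ← tangle_eq_arg, if_neg (tangle_ne_pi h)]

theorem exp_tangle_mul_I (e g : G.DEdge) :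
    Complex.exp (G.tangle e g * Complex.I) = G.unitDir g / G.unitDir e := by
  rw [tangle_eq_arg, Complex.exp_arg_mul_I (div_ne_zero (dir_ne_zero g) (dir_ne_zero e)),
    unitDir, unitDir, norm_div]
  have := dir_ne_zero e
  have := dir_ne_zero g
  push_cast
  field_simp

theorem transMatrix_of_isStep (x : Sym2 G.V → ℝ) {e g : G.DEdge} (h : G.IsStep e g) :
    G.transMatrix x e g = x (G.undir e) * Complex.exp (Complex.I / 2 * G.tangle e g) :=
  if_pos h

theorem wlam_eq_wx_mul_exp (x : Sym2 G.V → ℝ) :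
    ∀ {l : List G.DEdge}, l.IsChain G.IsStep →
      G.wlam x l = G.wx x l * Complex.exp (Complex.I / 2 * G.walpha l)
  | [], _ | [_], _ => by simp [wlam, wx, walpha]
  | e :: g :: l, h => by
    rw [List.isChain_cons_cons] at h
    have ih := wlam_eq_wx_mul_exp x h.2
    simp only [wlam, wx, walpha, List.tail_cons, List.zipWith_cons_cons, List.prod_cons,
      List.sum_cons, List.dropLast_cons_cons, List.map_cons] at ih ⊢
    rw [ih, transMatrix_of_isStep x h.1]
    push_cast
    rw [mul_add, Complex.exp_add]
    ring

theorem exp_walpha_mul_I {l : List G.DEdge} {a b : G.DEdge} (ha : l.head? = some a)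
    (hb : l.getLast? = some b) :
    Complex.exp (G.walpha l * Complex.I) = G.unitDir b / G.unitDir a := by
  rw [walpha, Complex.exp_list_sum_mul_I]
  simp only [List.map_zipWith, exp_tangle_mul_I]
  exact List.prod_zipWith_div_tail unitDir_ne_zero ha hb

theorem isChain_wrev {l : List G.DEdge} (h : l.IsChain G.IsStep) :
    (G.wrev l).IsChain G.IsStep := by
  rw [wrev, List.isChain_reverse, List.isChain_map]
  exact h.imp fun a b hab => ⟨hab.1.symm, fun hba => hab.2 hba.symm⟩

theorem walpha_wrev {l : List G.DEdge} (h : l.IsChain G.IsStep) :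
    G.walpha (G.wrev l) = -G.walpha l := by
  rw [walpha, wrev, List.zipWith_reverse_tail, List.sum_reverse, ← List.map_tail,
    List.zipWith_map, List.zipWith_tail_congr_of_isChain (fun _ _ => tangle_rev_rev) h,
    ← List.map_zipWith, ← List.sum_neg, walpha]

theorem wx_wrev (x : Sym2 G.V → ℝ) {l : List G.DEdge} {e : G.DEdge} (hh : l.head? = some e)
    (hl : l.getLast? = some (G.rev e)) : G.wx x (G.wrev l) = G.wx x l := by
  simp only [wx, wrev, List.dropLast_reverse, List.map_reverse, List.prod_reverse,
    ← List.map_tail, List.map_map, Function.comp_def, undir_rev, List.map_dropLast]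
  rw [List.map_tail]
  refine List.prod_tail_eq_prod_dropLast ?_
  simp only [List.head?_map, List.getLast?_map, hh, hl, Option.map_some, undir_rev]

theorem exp_walpha_mul_I_eq_neg_one {l : List G.DEdge} {e : G.DEdge} (hh : l.head? = some e)
    (hl : l.getLast? = some (G.rev e)) : Complex.exp (G.walpha l * Complex.I) = -1 := by
  rw [exp_walpha_mul_I hh hl, unitDir_rev, neg_div, div_self (unitDir_ne_zero e)]

theorem wlam_wrev (x : Sym2 G.V → ℝ) {l : List G.DEdge} {e : G.DEdge}
    (h : l.IsChain G.IsStep) (hh : l.head? = some e) (hl : l.getLast? = some (G.rev e)) :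
    G.wlam x (G.wrev l) = G.wx x l * (Complex.exp (Complex.I / 2 * G.walpha l))⁻¹ := by
  rw [wlam_eq_wx_mul_exp x (isChain_wrev h), walpha_wrev h, wx_wrev x hh hl, ← Complex.exp_neg]
  push_cast
  ring_nf

end PlaneGraph

/-- For a walk `w ∈ W_{e,-e}` from a directed edge to its reversal,
`λ(w) = -λ(w⁻¹)` and `λ(w) = ± i·x(w)`. -/
theorem wlam_to_reversal (G : PlaneGraph) (x : Sym2 G.V → ℝ) (e : G.DEdge)
    (w : List G.DEdge) (hw : G.IsWalk w)
    (hhead : w.head? = some e) (hlast : w.getLast? = some (G.rev e)) :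
    G.wlam x w = - G.wlam x (G.wrev w) ∧
      (G.wlam x w = Complex.I * ((G.wx x w : ℝ) : ℂ) ∨
        G.wlam x w = -(Complex.I * ((G.wx x w : ℝ) : ℂ))) := by
  obtain ⟨-, hchain⟩ := hw
  set ζ := Complex.exp (Complex.I / 2 * G.walpha w) with hζ
  have hζ_sq : ζ ^ 2 = -1 := by
    rw [hζ, ← Complex.exp_nat_mul, ← PlaneGraph.exp_walpha_mul_I_eq_neg_one hhead hlast]
    congr 1
    push_cast
    ring
  have hζ_inv : ζ⁻¹ = -ζ := inv_eq_of_mul_eq_one_right (by linear_combination -hζ_sq)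
  rw [PlaneGraph.wlam_wrev x hchain hhead hlast, PlaneGraph.wlam_eq_wx_mul_exp x hchain, ← hζ,
    hζ_inv]
  refine ⟨by ring, ?_⟩
  rcases sq_eq_sq_iff_eq_or_eq_neg.mp (hζ_sq.trans Complex.I_sq.symm) with h | h
  · exact .inl (by rw [h]; ring)
  · exact .inr (by rw [h]; ring)
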